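/- The closure in ℝ of the set {λ_{m,n} : n ≥ 2, m ∈ ℤ³, m₁ ≥ 1, m₂ ≥ 1, m₃ = −m₁−m₂, m₃ ≥ 1−n} equals the interval [−1/2, 1]. -/

import Mathlib

/-!
With `x = m₁ / n` and `y = m₂ / n`, `λ_{m,n} = (cos a + cos b + cos (a + b)) / 3` for
`a = 2π(x - y)/3` and `b = 2π(x + 2y)/3`, and this expression always lies in `[-1/2, 1]`.
Conversely, clearing denominators, every rational point of the open triangle
`0 < x, 0 < y, x + y < 1` gives an admissible `(m, n)`. Along the curve `t ↦ (t - t², t²)`,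
which runs inside the triangle for `0 < t < 1`, `λ` varies continuously from `1` at `(0, 0)` to
`-1/2` at `(0, 1)`; density of `ℚ` and the intermediate value theorem fill `[-1/2, 1]`.
-/

/-- The eigenvalue `λ_{m,n}` for `m = (m₁, m₂, m₃) ∈ ℤ³` with `m₁+m₂+m₃ = 0`. -/
noncomputable def lamEig3 (n : ℕ) (m₁ m₂ m₃ : ℤ) : ℝ :=
  (1 / 3) * (Real.cos (2 * Real.pi * ((m₁ - m₂ : ℤ) : ℝ) / (3 * n)) +
    Real.cos (2 * Real.pi * ((m₂ - m₃ : ℤ) : ℝ) / (3 * n)) +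
    Real.cos (2 * Real.pi * ((m₃ - m₁ : ℤ) : ℝ) / (3 * n)))

open Real Set

theorem DenseRange.image_closure_subset_closure {α X Y : Type*} [TopologicalSpace X]
    [TopologicalSpace Y] {g : α → X} (hg : DenseRange g) {f : X → Y} (hf : Continuous f)
    {U : Set X} (hU : IsOpen U) {S : Set Y} (hS : ∀ a, g a ∈ U → f (g a) ∈ S) :
    f '' closure U ⊆ closure S := by
  have hUg : closure U ⊆ closure (g '' (g ⁻¹' U)) :=
    closure_minimal (hg.subset_closure_image_preimage_of_isOpen hU) isClosed_closure
  refine (image_mono hUg).trans <| (image_closure_subset_closure_image hf).trans ?_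
  refine closure_mono ?_
  rintro _ ⟨_, ⟨a, ha, rfl⟩, rfl⟩
  exact hS a ha

/-- `cos a + cos b + cos (a + b) + 3 / 2 = ((cos a + cos b + 1) ^ 2 + (sin a - sin b) ^ 2) / 2`. -/
theorem neg_three_halves_le_cos_add_cos_add_cos_add (a b : ℝ) :
    -(3 / 2) ≤ cos a + cos b + cos (a + b) := by
  nlinarith [cos_add a b, sin_sq_add_cos_sq a, sin_sq_add_cos_sq b,
    sq_nonneg (cos a + cos b + 1), sq_nonneg (sin a - sin b)]

/-- `λ_{m,n}` as a function of the ratios `x = m₁ / n` and `y = m₂ / n`. -/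
noncomputable def lamEigRatio (x y : ℝ) : ℝ :=
  (1 / 3) * (cos (2 * π * (x - y) / 3) + cos (2 * π * (x + 2 * y) / 3) +
    cos (2 * π * (2 * x + y) / 3))

theorem lamEigRatio_mem_Icc (x y : ℝ) : lamEigRatio x y ∈ Icc (-(1 / 2)) 1 := by
  have hsum : 2 * π * (2 * x + y) / 3 = 2 * π * (x - y) / 3 + 2 * π * (x + 2 * y) / 3 := by ring
  have hlow :=
    neg_three_halves_le_cos_add_cos_add_cos_add (2 * π * (x - y) / 3) (2 * π * (x + 2 * y) / 3)
  rw [← hsum] at hlow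
  unfold lamEigRatio
  constructor
  · linarith
  · linarith [cos_le_one (2 * π * (x - y) / 3), cos_le_one (2 * π * (x + 2 * y) / 3),
      cos_le_one (2 * π * (2 * x + y) / 3)]

theorem lamEigRatio_zero_zero : lamEigRatio 0 0 = 1 := by
  norm_num [lamEigRatio]

theorem lamEigRatio_zero_one : lamEigRatio 0 1 = -(1 / 2) := by
  have h₁ : 2 * π * (0 - 1) / 3 = -(π - π / 3) := by ring
  have h₂ : 2 * π * (0 + 2 * 1) / 3 = π / 3 + π := by ring
  have h₃ : 2 * π * (2 * 0 + 1) / 3 = π - π / 3 := by ring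
  rw [lamEigRatio, h₁, h₂, h₃, cos_neg, cos_pi_sub, cos_add_pi, cos_pi_div_three]
  norm_num

@[fun_prop]
theorem Continuous.lamEigRatio {X : Type*} [TopologicalSpace X] {f g : X → ℝ}
    (hf : Continuous f) (hg : Continuous g) : Continuous fun t => lamEigRatio (f t) (g t) := by
  unfold _root_.lamEigRatio; fun_prop

theorem lamEig3_eq_lamEigRatio (n : ℕ) (m₁ m₂ : ℤ) :
    lamEig3 n m₁ m₂ (-m₁ - m₂) = lamEigRatio (m₁ / n) (m₂ / n) := by
  rw [lamEig3, lamEigRatio, ← cos_neg (2 * π * ((-m₁ - m₂ - m₁ : ℤ) : ℝ) / (3 * n))]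
  push_cast
  ring_nf

theorem Rat.exists_common_den (x y : ℚ) :
    ∃ n : ℕ, 0 < n ∧ ∃ a b : ℤ, x = a / n ∧ y = b / n := by
  refine ⟨x.den * y.den, by positivity, x.num * y.den, y.num * x.den, ?_, ?_⟩ <;>
  · rw [eq_div_iff (by positivity)]
    push_cast
    rw [← Rat.mul_den_eq_num]
    ring

def lamEigSet : Set ℝ :=
  {x : ℝ | ∃ n : ℕ, 2 ≤ n ∧ ∃ m₁ m₂ : ℤ, 1 ≤ m₁ ∧ 1 ≤ m₂ ∧
    1 - (n : ℤ) ≤ -m₁ - m₂ ∧ x = lamEig3 n m₁ m₂ (-m₁ - m₂)}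

theorem lamEigRatio_mem_lamEigSet (x y : ℚ) (hx : 0 < x) (hy : 0 < y) (hxy : x + y < 1) :
    lamEigRatio x y ∈ lamEigSet := by
  obtain ⟨n, hn, a, b, rfl, rfl⟩ := Rat.exists_common_den x y
  have hn' : (0 : ℚ) < n := by exact_mod_cast hn
  have ha : (0 : ℚ) < a := (div_pos_iff_of_pos_right hn').mp hx
  have hb : (0 : ℚ) < b := (div_pos_iff_of_pos_right hn').mp hy
  have hab : (a + b : ℚ) < n := by rwa [← add_div, div_lt_one hn'] at hxy
  norm_cast at ha hb hab
  refine ⟨n, by omega, a, b, ha, hb, by omega, ?_⟩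
  rw [lamEig3_eq_lamEigRatio]
  push_cast
  rfl

/-- The closure of the set of eigenvalues
`λ_{m,n}` with `n ≥ 2`, `m₁, m₂ ≥ 1`, `m₃ = −m₁−m₂ ≥ 1−n` equals `[−1/2, 1]`. -/
theorem closure_lamEig_eq_Icc :
    closure {x : ℝ | ∃ n : ℕ, 2 ≤ n ∧ ∃ m₁ m₂ : ℤ, 1 ≤ m₁ ∧ 1 ≤ m₂ ∧
        1 - (n : ℤ) ≤ -m₁ - m₂ ∧ x = lamEig3 n m₁ m₂ (-m₁ - m₂)} =
      Set.Icc (-(1 / 2) : ℝ) 1 := by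
  change closure lamEigSet = _
  refine (closure_minimal ?_ isClosed_Icc).antisymm ?_
  · rintro _ ⟨n, -, m₁, m₂, -, -, -, rfl⟩
    rw [lamEig3_eq_lamEigRatio]
    exact lamEigRatio_mem_Icc _ _
  let F : ℝ → ℝ := fun t => lamEigRatio (t - t ^ 2) (t ^ 2)
  have hF : Continuous F := by fun_prop
  have hIVT : Icc (-(1 / 2)) 1 ⊆ F '' closure (Ioo 0 1) := by
    simpa [F, closure_Ioo, lamEigRatio_zero_zero, lamEigRatio_zero_one] using
      intermediate_value_Icc' zero_le_one hF.continuousOn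
  refine hIVT.trans (Rat.denseRange_cast.image_closure_subset_closure hF isOpen_Ioo ?_)
  rintro q ⟨hq₀, hq₁⟩
  norm_cast at hq₀ hq₁
  have h := lamEigRatio_mem_lamEigSet (q - q ^ 2) (q ^ 2) (by nlinarith) (by positivity)
    (by linarith)
  push_cast at h
  exact h
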